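/- Let n be odd and Γ = Cay(D_{2n}, S) a Cayley digraph with A = Aut(Γ). If the vertex stabilizer A₁ of the identity vertex satisfies gcd(|A₁|, n) = 1, then Γ is a CI-digraph. -/

import Mathlib

/-- The Cayley digraph relation of `G` with connection set `S`:
there is an arc from `x` to `y` iff `y = s * x` for some `s ∈ S`. -/
def cayRel {G : Type*} [Group G] (S : Set G) : G → G → Prop :=
  fun x y => y * x⁻¹ ∈ S

/-- The automorphism group of the Cayley digraph `Cay(G,S)`,
as a subgroup of the permutations of the vertex set `G`. -/
def cayAut {G : Type*} [Group G] (S : Set G) : Subgroup (Equiv.Perm G) where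
  carrier := {f | ∀ x y, cayRel S (f x) (f y) ↔ cayRel S x y}
  one_mem' := by intro x y; rfl
  mul_mem' := by
    intro f g hf hg x y
    rw [Equiv.Perm.mul_apply, Equiv.Perm.mul_apply, hf, hg]
  inv_mem' := by
    intro f hf x y
    simpa [Equiv.Perm.inv_def] using (hf (f⁻¹ x) (f⁻¹ y)).symm

/-- `Cay(G,S)` is a CI-digraph: any isomorphic Cayley digraph `Cay(G,T)`
is Cayley isomorphic to it. -/
def IsCIDigraph {G : Type*} [Group G] (S : Set G) : Prop :=
  ∀ T : Set G, (1 : G) ∉ T → Nonempty (cayRel S ≃r cayRel T) →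
    ∃ α : G ≃* G, α '' S = T

/-- `G` has the `m`-DCI property: every Cayley digraph of `G` of out-valency `m`
is a CI-digraph. -/
def HasDCI (G : Type*) [Group G] (m : ℕ) : Prop :=
  ∀ S : Set G, (1 : G) ∉ S → S.ncard = m → IsCIDigraph S

/-- The right regular representation `R(G)` as a subgroup of `Perm G`. -/
def rightReg (G : Type*) [Group G] : Subgroup (Equiv.Perm G) where
  carrier := Set.range fun g : G => Equiv.mulRight g
  one_mem' := ⟨1, by ext x; simp⟩
  mul_mem' := by
    rintro _ _ ⟨g, rfl⟩ ⟨h, rfl⟩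
    exact ⟨h * g, by ext x; simp [mul_assoc]⟩
  inv_mem' := by
    rintro _ ⟨g, rfl⟩
    exact ⟨g⁻¹, by ext x; simp [Equiv.Perm.inv_def]⟩

/-- A subgroup of permutations of `V` is regular if for all `x y : V` there is a
unique element sending `x` to `y`. -/
def IsRegularSubgroup {V : Type*} (H : Subgroup (Equiv.Perm V)) : Prop :=
  ∀ x y : V, ∃! h : H, (h : Equiv.Perm V) x = y

/-!
Let `A = Aut Cay(D_{2n}, S)`, let `R` be the right regular representation of `D_{2n}` and
`C = ⟨R(r)⟩` its rotation subgroup. As `A` is transitive, `|A| = 2n|A₁|`, so every cyclic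
subgroup of order `n` of `A` is an abelian Hall subgroup, and abelian Hall subgroups of the same
order are conjugate (induction on the order of the group: two of them can be conjugated to share
a Sylow subgroup `Q`, they then lie in `N(Q)`, and one passes to `N(Q)/Q`).

If `f : Cay(D_{2n}, S) → Cay(D_{2n}, T)` is an isomorphism, then `f⁻¹ C f ≤ A` is such a
subgroup, so after composing `f` with an element of `A` we may assume that `f` normalizes `C`.
Then `f` normalizes `R`: a conjugate of a reflection of `R` is an involution inverting `C`, and
such an element of the regular group `f R f⁻¹` is a right multiplication. Composing with one more
right multiplication, `f` fixes `1`; a permutation fixing `1` and normalizing `R` is a group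
automorphism, and it maps `S` onto `T`.
-/

open Equiv Subgroup DihedralGroup Pointwise

namespace Subgroup

variable {G : Type*} [Group G]

instance pointwise_smul_isMulCommutative {α : Type*} [Monoid α] [MulDistribMulAction α G]
    (a : α) (H : Subgroup G) [IsMulCommutative H] : IsMulCommutative (a • H : Subgroup G) :=
  map_isMulCommutative (H := H) _

theorem card_conj_smul (g : G) (H : Subgroup G) :
    Nat.card (MulAut.conj g • H : Subgroup G) = Nat.card H :=
  Nat.card_congr (equivSMul _ H).toEquiv.symm

theorem index_conj_smul (g : G) (H : Subgroup G) : (MulAut.conj g • H).index = H.index := by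
  simpa using relIndex_pointwise_smul (MulAut.conj g) H ⊤

theorem conj_smul_zpowers (g x : G) : MulAut.conj g • zpowers x = zpowers (MulAut.conj g x) :=
  MonoidHom.map_zpowers (MulAut.conj g).toMonoidHom x

theorem mem_normalizer_iff_conj_smul_eq {H : Subgroup G} {g : G} :
    g ∈ normalizer (H : Set G) ↔ MulAut.conj g • H = H :=
  mem_normalizer_iff_map_conj_eq

theorem mul_inv_mem_normalizer_zpowers {f g y : G}
    (h : MulAut.conj g • zpowers (MulAut.conj f⁻¹ y) = zpowers y) :
    f * g⁻¹ ∈ normalizer (zpowers y : Set G) := by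
  rw [mem_normalizer_iff_conj_smul_eq, map_mul, mul_smul, map_inv]
  conv_lhs => rw [← h, inv_smul_smul, conj_smul_zpowers, map_inv, MulAut.apply_inv_self]

theorem map_conj_smul {G' : Type*} [Group G'] (f : G →* G') (g : G) (H : Subgroup G) :
    (MulAut.conj g • H).map f = MulAut.conj (f g) • H.map f := by
  ext y
  simp [mem_smul_pointwise_iff_exists, MulAut.smul_def]

theorem conj_eq_inv_of_mem_normalizer {C : Subgroup G} {w x : G}
    (hw : ∀ c ∈ C, w * c * w⁻¹ = c⁻¹) (hx : x ∈ normalizer (C : Set G)) :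
    ∀ c ∈ C, x * w * x⁻¹ * c * (x * w * x⁻¹)⁻¹ = c⁻¹ := by
  intro c hc
  calc x * w * x⁻¹ * c * (x * w * x⁻¹)⁻¹
        = x * (w * (x⁻¹ * c * x) * w⁻¹) * x⁻¹ := by group
    _ = c⁻¹ := by rw [hw _ ((mem_normalizer_iff''.mp hx c).mp hc)]; group

theorem conj_smul_eq_of_subgroupOf {N H K : Subgroup G} (hH : H ≤ N) (hK : K ≤ N) {x : N}
    (hx : MulAut.conj x • H.subgroupOf N = K.subgroupOf N) : MulAut.conj (x : G) • H = K := by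
  rwa [conj_smul_subgroupOf hH, subgroupOf_inj, inf_of_le_left hK,
    inf_of_le_left (conj_smul_le_of_le hH x)] at hx

theorem conj_smul_eq_of_map_mk' {P H K : Subgroup G} [P.Normal] (hH : P ≤ H) (hK : P ≤ K)
    {x : G}
    (hx : MulAut.conj (x : G ⧸ P) • H.map (QuotientGroup.mk' P) = K.map (QuotientGroup.mk' P)) :
    MulAut.conj x • H = K := by
  rw [← QuotientGroup.mk'_apply, ← map_conj_smul] at hx
  refine map_injective_of_ker_le _ ?_ (by rwa [QuotientGroup.ker_mk']) hx
  rw [QuotientGroup.ker_mk', ← Normal.conj_smul_eq_self x P]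
  exact pointwise_smul_le_pointwise_smul_iff.mpr hH

theorem coprime_card_index_subgroupOf {H N : Subgroup G} (hHN : H ≤ N)
    (hH : (Nat.card H).Coprime H.index) :
    (Nat.card (H.subgroupOf N)).Coprime (H.subgroupOf N).index := by
  rw [Nat.card_congr (subgroupOfEquivOfLe hHN).toEquiv]
  exact hH.coprime_dvd_right (relIndex_dvd_index_of_le hHN)

theorem coprime_card_index_map {G' : Type*} [Group G'] {f : G →* G'}
    (hf : Function.Surjective f) {H : Subgroup G} (hker : f.ker ≤ H)
    (hH : (Nat.card H).Coprime H.index) : (Nat.card (H.map f)).Coprime (H.map f).index := by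
  rw [H.index_map_eq hf hker]
  exact hH.coprime_dvd_left (card_map_dvd H f)

section Finite

variable [Finite G]

theorem card_eq_card_of_index_eq {H K : Subgroup G} (h : H.index = K.index) :
    Nat.card H = Nat.card K :=
  Nat.eq_of_mul_eq_mul_right (Nat.pos_of_ne_zero index_ne_zero_of_finite) <| by
    rw [card_mul_index, h, card_mul_index]

theorem index_subgroupOf_eq_of_index_eq {H K N : Subgroup G} (hH : H ≤ N) (hK : K ≤ N)
    (hHK : H.index = K.index) : (H.subgroupOf N).index = (K.subgroupOf N).index :=
  Nat.eq_of_mul_eq_mul_right (Nat.pos_of_ne_zero index_ne_zero_of_finite) <| by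
    change H.relIndex N * N.index = K.relIndex N * N.index
    rw [relIndex_mul_index hH, relIndex_mul_index hK, hHK]

theorem card_quotient_subgroupOf_lt {P N : Subgroup G} (hP : P ≠ ⊥) (hPN : P ≤ N) :
    Nat.card (N ⧸ P.subgroupOf N) < Nat.card G := by
  have hcard := card_eq_card_quotient_mul_card_subgroup (P.subgroupOf N)
  rw [Nat.card_congr (subgroupOfEquivOfLe hPN).toEquiv] at hcard
  calc Nat.card (N ⧸ P.subgroupOf N) < Nat.card (N ⧸ P.subgroupOf N) * Nat.card P :=
        lt_mul_of_one_lt_right Nat.card_pos ((one_lt_card_iff_ne_bot P).mpr hP)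
    _ = Nat.card N := hcard.symm
    _ ≤ Nat.card G := card_le_card_group N

theorem exists_sylow_le_of_not_dvd_index {p : ℕ} [Fact p.Prime] {H : Subgroup G}
    (hH : ¬ p ∣ H.index) : ∃ P : Sylow p G, (P : Subgroup G) ≤ H := by
  obtain ⟨Q⟩ : Nonempty (Sylow p H) := inferInstance
  refine ⟨(Q.isPGroup'.map H.subtype).toSylow ?_, map_subtype_le _⟩
  rw [index_map_subtype]
  exact (Nat.Prime.dvd_mul Fact.out).not.mpr (not_or.mpr ⟨Q.not_dvd_index, hH⟩)

theorem exists_sylow_le_conj_smul_of_coprime {p : ℕ} [Fact p.Prime] {H K : Subgroup G}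
    (hHK : H.index = K.index) (hH : (Nat.card H).Coprime H.index) (hpH : p ∣ Nat.card H) :
    ∃ (g : G) (Q : Sylow p G),
      (Q : Subgroup G) ≤ MulAut.conj g • H ∧ (Q : Subgroup G) ≤ K := by
  have hpH' : ¬ p ∣ H.index :=
    (Nat.Prime.coprime_iff_not_dvd Fact.out).mp (hH.coprime_dvd_left hpH)
  obtain ⟨P, hPH⟩ := exists_sylow_le_of_not_dvd_index hpH'
  obtain ⟨Q, hQK⟩ := exists_sylow_le_of_not_dvd_index (hHK ▸ hpH')
  obtain ⟨g, rfl⟩ := MulAction.exists_smul_eq G P Q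
  refine ⟨g, g • P, ?_, hQK⟩
  rwa [Sylow.coe_subgroup_smul, pointwise_smul_le_pointwise_smul_iff]

theorem exists_conj_smul_eq_of_coprime {H K : Subgroup G}
    [IsMulCommutative H] [IsMulCommutative K] (hHK : H.index = K.index)
    (hH : (Nat.card H).Coprime H.index) : ∃ g : G, MulAut.conj g • H = K := by
  induction hG : Nat.card G using Nat.strong_induction_on generalizing G with
  | _ c ih =>
    by_cases h1 : Nat.card H = 1
    · have hK1 : Nat.card K = 1 := card_eq_card_of_index_eq hHK ▸ h1
      exact ⟨1, by rw [eq_bot_of_card_eq H h1, eq_bot_of_card_eq K hK1, smul_bot]⟩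
    obtain ⟨p, hp, hpH⟩ := Nat.exists_prime_and_dvd h1
    have := Fact.mk hp
    obtain ⟨g, Q, hQH', hQK⟩ := exists_sylow_le_conj_smul_of_coprime hHK hH hpH
    set H' := (MulAut.conj g • H : Subgroup G)
    set N := normalizer (Q : Set G)
    -- `Q` is normal in the abelian groups `H'` and `K`
    have hH'N : H' ≤ N := le_normalizer_of_normal_subgroupOf hQH'
    have hKN : K ≤ N := le_normalizer_of_normal_subgroupOf hQK
    have : ((Q : Subgroup G).subgroupOf N).Normal := normal_in_normalizer
    set φ := QuotientGroup.mk' ((Q : Subgroup G).subgroupOf N)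
    have hsurj : Function.Surjective φ := QuotientGroup.mk'_surjective _
    have hker : φ.ker = (Q : Subgroup G).subgroupOf N := QuotientGroup.ker_mk' _
    have hQH'' : (Q : Subgroup G).subgroupOf N ≤ H'.subgroupOf N := fun x hx => hQH' hx
    have hQK'' : (Q : Subgroup G).subgroupOf N ≤ K.subgroupOf N := fun x hx => hQK hx
    have hkerH : φ.ker ≤ H'.subgroupOf N := hker.le.trans hQH''
    have hkerK : φ.ker ≤ K.subgroupOf N := hker.le.trans hQK''
    have hlt : Nat.card (N ⧸ (Q : Subgroup G).subgroupOf N) < c :=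
      hG ▸ card_quotient_subgroupOf_lt
        (Q.ne_bot_of_dvd_card (hpH.trans (card_subgroup_dvd_card H))) le_normalizer
    have hidx : (H'.subgroupOf N).index = (K.subgroupOf N).index :=
      index_subgroupOf_eq_of_index_eq hH'N hKN (by rw [index_conj_smul, hHK])
    have hH' : (Nat.card H').Coprime H'.index := by rwa [card_conj_smul, index_conj_smul]
    obtain ⟨q, hq⟩ := ih _ hlt (H := (H'.subgroupOf N).map φ) (K := (K.subgroupOf N).map φ)
      (by rw [index_map_eq _ hsurj hkerH, index_map_eq _ hsurj hkerK, hidx])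
      (coprime_card_index_map hsurj hkerH (coprime_card_index_subgroupOf hH'N hH')) rfl
    obtain ⟨x, rfl⟩ := hsurj q
    refine ⟨x * g, ?_⟩
    rw [map_mul, mul_smul]
    exact conj_smul_eq_of_subgroupOf hH'N hKN (conj_smul_eq_of_map_mk' hQH'' hQK'' hq)

end Finite

end Subgroup

theorem orderOf_mulRight {G : Type*} [Group G] (a : G) :
    orderOf (Equiv.mulRight a) = orderOf a :=
  orderOf_eq_orderOf_iff.mpr fun k => by
    rw [pow_mulRight]
    exact ⟨fun h => by simpa using congrArg (· 1) h, fun h => h ▸ mulRight_one⟩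

section Cayley

variable {G : Type*} [Group G]

theorem mulRight_mem_cayAut (S : Set G) (g : G) : Equiv.mulRight g ∈ cayAut S := by
  intro x y
  simp [cayRel, mul_assoc]

theorem conj_mem_cayAut {S T : Set G} {f : Perm G}
    (hf : ∀ x y, cayRel T (f x) (f y) ↔ cayRel S x y) {a : Perm G} (ha : a ∈ cayAut T) :
    f⁻¹ * a * f ∈ cayAut S := by
  intro x y
  rw [← hf]
  simpa [Perm.mul_apply, hf] using ha (f x) (f y)

theorem card_cayAut [Finite G] (S : Set G) :
    Nat.card (cayAut S) = Nat.card G * Nat.card {f : cayAut S // (f : Perm G) 1 = 1} := by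
  have horbit : MulAction.orbit (cayAut S) (1 : G) = Set.univ :=
    Set.eq_univ_of_forall fun y => ⟨⟨Equiv.mulRight y, mulRight_mem_cayAut S y⟩, one_mul y⟩
  rw [← card_mul_index (MulAction.stabilizer (cayAut S) (1 : G)), MulAction.index_stabilizer,
    horbit, Set.ncard_univ, mul_comm]
  rfl

theorem eq_of_conj_mem_rightReg_of_apply_eq {x k k' : Perm G}
    (hk : x⁻¹ * k * x ∈ rightReg G) (hk' : x⁻¹ * k' * x ∈ rightReg G) {a : G}
    (h : k a = k' a) : k = k' := by
  obtain ⟨g, hg⟩ := hk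
  obtain ⟨g', hg'⟩ := hk'
  have hgg' : g = g' := by
    have e := congrArg (· (x⁻¹ a)) hg
    have e' := congrArg (· (x⁻¹ a)) hg'
    simp only [Perm.mul_apply, Perm.coe_inv, apply_symm_apply, coe_mulRight, h] at e e'
    exact mul_left_cancel (e.trans e'.symm)
  subst hgg'
  simpa using hg.symm.trans hg'

theorem map_mul_of_mem_normalizer_rightReg {f : Perm G}
    (hf : f ∈ normalizer (rightReg G : Set (Perm G))) (h1 : f 1 = 1) (a b : G) :
    f (a * b) = f a * f b := by
  obtain ⟨c, hc⟩ := (mem_normalizer_iff.mp hf _).mp ⟨b, rfl⟩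
  have hf1 : f⁻¹ 1 = 1 := by rw [Perm.inv_eq_iff_eq, h1]
  have hcb : c = f b := by simpa [Perm.mul_apply, hf1] using congrArg (· 1) hc
  simpa [Perm.mul_apply, hcb] using (congrArg (· (f a)) hc).symm

theorem image_eq_of_cayRel_iff {S T : Set G} {f : Perm G}
    (hf : ∀ x y, cayRel T (f x) (f y) ↔ cayRel S x y) (h1 : f 1 = 1) : f '' S = T := by
  ext t
  obtain ⟨s, rfl⟩ := f.surjective t
  simpa [cayRel, h1] using (hf 1 s).symm

theorem exists_mulEquiv_image_eq_of_mem_normalizer_rightReg {S T : Set G} {f : Perm G}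
    (hfR : f ∈ normalizer (rightReg G : Set (Perm G)))
    (hf : ∀ x y, cayRel T (f x) (f y) ↔ cayRel S x y) : ∃ α : G ≃* G, α '' S = T := by
  set f' := Equiv.mulRight (f 1)⁻¹ * f
  have hf'R : f' ∈ normalizer (rightReg G : Set (Perm G)) :=
    mul_mem (le_normalizer ⟨_, rfl⟩) hfR
  have hf'1 : f' 1 = 1 := mul_inv_cancel (f 1)
  have hf' : ∀ x y, cayRel T (f' x) (f' y) ↔ cayRel S x y := fun x y =>
    (mulRight_mem_cayAut T _ (f x) (f y)).trans (hf x y)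
  exact ⟨⟨f', map_mul_of_mem_normalizer_rightReg hf'R hf'1⟩,
    image_eq_of_cayRel_iff hf' hf'1⟩

end Cayley

namespace DihedralGroup

variable {n : ℕ}

def rightRegRotations (n : ℕ) : Subgroup (Perm (DihedralGroup n)) :=
  zpowers (Equiv.mulRight (r 1))

theorem mem_rightRegRotations {w : Perm (DihedralGroup n)} :
    w ∈ rightRegRotations n ↔ ∃ t : ZMod n, Equiv.mulRight (r t) = w := by
  simp only [rightRegRotations, mem_zpowers_iff, zpow_mulRight, r_one_zpow]
  constructor
  · rintro ⟨k, rfl⟩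
    exact ⟨k, rfl⟩
  · rintro ⟨t, rfl⟩
    obtain ⟨k, rfl⟩ := ZMod.intCast_surjective t
    exact ⟨k, rfl⟩

theorem rightRegRotations_le_rightReg : rightRegRotations n ≤ rightReg (DihedralGroup n) :=
  zpowers_le.mpr ⟨r 1, rfl⟩

theorem mulRight_sr_conj_mulRight_r (i t : ZMod n) :
    Equiv.mulRight (sr i) * Equiv.mulRight (r t) * (Equiv.mulRight (sr i))⁻¹
      = (Equiv.mulRight (r t))⁻¹ := by
  ext z
  simp [Perm.mul_apply, mul_assoc, sr_mul_sr]

theorem eq_mulRight_sr_of_inverts {k : Perm (DihedralGroup n)}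
    (hinv : ∀ t, k * Equiv.mulRight (r t) * k⁻¹ = (Equiv.mulRight (r t))⁻¹) (hk : k * k = 1)
    {j : ZMod n} (hj : k 1 = sr j) : k = Equiv.mulRight (sr j) := by
  have key : ∀ z t, k (z * r t) = k z * r (-t) := by
    intro z t
    simpa [Perm.mul_apply] using congrArg (· (k z)) (hinv t)
  have hsr : k (sr j) = 1 := by simpa [Perm.mul_apply, hj] using congrArg (· 1) hk
  ext z
  cases z with
  | r t => simpa [hj, sub_eq_add_neg] using key 1 t
  | sr t => simpa [hsr] using key (sr j) (t - j)

theorem conj_mem_rightReg_of_mem_normalizer {x w : Perm (DihedralGroup n)}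
    (hx : x ∈ normalizer (rightRegRotations n)) (hw : w ∈ rightReg (DihedralGroup n)) :
    x * w * x⁻¹ ∈ rightReg (DihedralGroup n) := by
  obtain ⟨y, rfl⟩ := hw
  cases y with
  | r i =>
    exact rightRegRotations_le_rightReg
      ((mem_normalizer_iff.mp hx _).mp (mem_rightRegRotations.mpr ⟨i, rfl⟩))
  | sr i =>
    set k := x * Equiv.mulRight (sr i) * x⁻¹
    have hinv : ∀ t, k * Equiv.mulRight (r t) * k⁻¹ = (Equiv.mulRight (r t))⁻¹ := by
      refine fun t => conj_eq_inv_of_mem_normalizer ?_ hx _ (mem_rightRegRotations.mpr ⟨t, rfl⟩)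
      rintro c hc
      obtain ⟨t, rfl⟩ := mem_rightRegRotations.mp hc
      exact mulRight_sr_conj_mulRight_r i t
    have hk : k * k = 1 := by
      calc k * k = x * Equiv.mulRight (sr i * sr i) * x⁻¹ := by
            rw [mulRight_mul]; simp only [k]; group
        _ = 1 := by rw [sr_mul_self, mulRight_one, mul_one, mul_inv_cancel]
    have hxk : x⁻¹ * k * x ∈ rightReg (DihedralGroup n) := ⟨sr i, by simp only [k]; group⟩
    rcases hk1 : k 1 with j | j
    · have hxr : x⁻¹ * Equiv.mulRight (r j) * x ∈ rightReg (DihedralGroup n) :=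
        rightRegRotations_le_rightReg
          ((mem_normalizer_iff''.mp hx _).mp (mem_rightRegRotations.mpr ⟨j, rfl⟩))
      rw [eq_of_conj_mem_rightReg_of_apply_eq hxk hxr (a := 1) (by simp [hk1])]
      exact ⟨r j, rfl⟩
    · rw [eq_mulRight_sr_of_inverts hinv hk hk1]
      exact ⟨sr j, rfl⟩

theorem normalizer_rightRegRotations_le :
    normalizer (rightRegRotations n)
      ≤ normalizer (rightReg (DihedralGroup n) : Set (Perm (DihedralGroup n))) :=
  fun x hx => mem_normalizer_iff.mpr fun w =>
    ⟨conj_mem_rightReg_of_mem_normalizer hx, fun h => by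
      simpa [mul_assoc] using conj_mem_rightReg_of_mem_normalizer (inv_mem hx) h⟩

theorem index_zpowers_cayAut [NeZero n] {S : Set (DihedralGroup n)} {a : cayAut S}
    (ha : orderOf a = n) :
    (zpowers a).index = 2 * Nat.card {f : cayAut S // (f : Perm (DihedralGroup n)) 1 = 1} := by
  have := card_mul_index (zpowers a)
  rw [Nat.card_zpowers, ha, card_cayAut, nat_card, mul_assoc, mul_left_comm] at this
  exact Nat.eq_of_mul_eq_mul_left (Nat.pos_of_neZero n) this

end DihedralGroup

theorem stmt12_general (n : ℕ) (hodd : Odd n) (S : Set (DihedralGroup n))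
    (hcop : Nat.Coprime
      (Nat.card {f : cayAut S // ((f : Equiv.Perm (DihedralGroup n)) 1 = 1)}) n) :
    IsCIDigraph S := by
  have : NeZero n := ⟨hodd.pos.ne'⟩
  rintro T - ⟨e⟩
  set f : Perm (DihedralGroup n) := e.toEquiv
  have hf : ∀ x y, cayRel T (f x) (f y) ↔ cayRel S x y := fun x y => e.map_rel_iff
  let ρA : cayAut S := ⟨Equiv.mulRight (r 1), mulRight_mem_cayAut S _⟩
  let σA : cayAut S := ⟨MulAut.conj f⁻¹ (Equiv.mulRight (r 1)),
    by simpa using conj_mem_cayAut hf (mulRight_mem_cayAut T (r 1))⟩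
  have hρ : orderOf ρA = n := by rw [orderOf_mk, orderOf_mulRight, orderOf_r_one]
  have hσ : orderOf σA = n := by
    rw [orderOf_mk, MulEquiv.orderOf_eq, orderOf_mulRight, orderOf_r_one]
  obtain ⟨g, hg⟩ := exists_conj_smul_eq_of_coprime (H := zpowers σA) (K := zpowers ρA)
    (by rw [index_zpowers_cayAut hσ, index_zpowers_cayAut hρ])
    (by rw [Nat.card_zpowers, hσ, index_zpowers_cayAut hσ]
        exact Nat.Coprime.mul_right hodd.coprime_two_right hcop.symm)
  have hnorm : f * (g : Perm (DihedralGroup n))⁻¹ ∈ normalizer (rightRegRotations n) := by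
    apply mul_inv_mem_normalizer_zpowers
    have := congrArg (map (cayAut S).subtype) hg
    rwa [map_conj_smul, MonoidHom.map_zpowers, MonoidHom.map_zpowers] at this
  exact exists_mulEquiv_image_eq_of_mem_normalizer_rightReg
    (normalizer_rightRegRotations_le hnorm) fun x y => (hf _ _).trans ((g⁻¹).2 x y)

/-- For `n` odd, if the stabilizer of the identity vertex in
`Aut(Cay(D_{2n},S))` has order coprime to `n`, then `Cay(D_{2n},S)` is a
CI-digraph. -/
theorem stmt12 (n : ℕ) (hodd : Odd n) (S : Set (DihedralGroup n))
    (hS : (1 : DihedralGroup n) ∉ S)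
    (hcop : Nat.Coprime
      (Nat.card {f : cayAut S // ((f : Equiv.Perm (DihedralGroup n)) 1 = 1)}) n) :
    IsCIDigraph S :=
  stmt12_general n hodd S hcop
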